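/- The Q&A estimator is unbiased: for every group g ∈ {1,…,k}, E[Ŝ_QA(g)] = E[S(g)], where S(g) = Σ_{i : G_i = g} V_i is the true aggregate and Ŝ_QA(g) = ((2m−1)/(2m − 2mλ − 1))·Σ_{i=1}^n Q_i(g, A_i). (Theorem 1, part 3, unbiasedness.) -/

import Mathlib

open scoped BigOperators

noncomputable section

/-- The value alphabet `V = {±1, …, ±m} ⊆ ℤ`. -/
def Vset (m : ℕ) : Finset ℤ := (Finset.Icc (-(m : ℤ)) m).erase 0

/-- Values as a (finite) type. -/
abbrev Vt (m : ℕ) : Type := {v : ℤ // v ∈ Vset m}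

/-- Query matrices: `k × 2m` matrices whose rows are permutations of `V`,
encoded row-wise as equivalences between column indices and values. -/
abbrev Query (k m : ℕ) : Type := Fin k → (Fin (2*m) ≃ Vt m)

/-- The randomized response channel `RR_λ` on `V`: probability that input `v`
is turned into output `w`. -/
def RR (m : ℕ) (lam : ℝ) (v w : Vt m) : ℝ :=
  if w = v then 1 - lam else lam / (2*m - 1)
/-- One Q&A user's outcome: his group, value, query matrix, and randomized value. -/
abbrev OmegaQA (k m : ℕ) : Type := Fin k × Vt m × Query k m × Vt m

/-- Probability weight of a single Q&A user's outcome `(g, v, q, v̊)`: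
`θ(g)·p_g(v)·(1/|𝒬|)·RR_λ(v, v̊)` (`G ~ θ`; given `G = g`, `V ~ p_g`; `Q`
uniform on `𝒬` independent of `(G,V)`; `V̊ = RR_λ(V)`). -/
def wQA (k m : ℕ) (θ : Fin k → ℝ) (p : Fin k → Vt m → ℝ) (lam : ℝ)
    (ω : OmegaQA k m) : ℝ :=
  θ ω.1 * p ω.1 ω.2.1 * (1 / (Fintype.card (Query k m) : ℝ)) *
    RR m lam ω.2.1 ω.2.2.2

/-- The entry `Q(j, A)` in row `j` of the decoded query column: the user's
answer is `A = a(Q, G, V̊)`, the column of row `G` of `Q` containing `V̊`. -/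
def decodeQA (k m : ℕ) (ω : OmegaQA k m) (j : Fin k) : ℤ :=
  ((ω.2.2.1 j) ((ω.2.2.1 ω.1).symm ω.2.2.2) : ℤ)

/-- True aggregate of group `g`: `S(g) = Σ_{i : G_i = g} V_i`. -/
def trueAgg (k m n : ℕ) (ω : Fin n → OmegaQA k m) (g : Fin k) : ℝ :=
  ∑ i, if (ω i).1 = g then (((ω i).2.1 : ℤ) : ℝ) else 0

/-- The Q&A estimator `Ŝ_QA(g) = ((2m−1)/(2m−2mλ−1))·Σ_i Q_i(g, A_i)`. -/
def estQA (k m n : ℕ) (lam : ℝ) (ω : Fin n → OmegaQA k m) (g : Fin k) : ℝ :=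
  ((2*m - 1) / (2*m - 2*m*lam - 1)) * ∑ i, ((decodeQA k m (ω i) g : ℤ) : ℝ)

/-! Fix the user's group `g'` and value `v`. If `g' = g`, the decoded entry `Q(g, A)` is the
randomized value `V̊` itself, whose mean is `(2m − 2mλ − 1)/(2m − 1) · v` because the elements of
`V` sum to zero. If `g' ≠ g`, it averages to zero over the uniform query: negating row `g` is a
bijection of `𝒬` that fixes row `g'` and flips the sign of `Q(g, A)`. So one user's rescaled
answer has the same mean as `[G = g] · V`, and the `n`-user statement follows by linearity. -/

open Finset

lemma sum_eq_zero_of_comp_eq_neg {α : Type*} [Fintype α] (σ : α ≃ α) {f : α → ℝ}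
    (h : ∀ a, f (σ a) = -f a) : ∑ a, f a = 0 := by
  have := σ.sum_comp f
  simp only [h, sum_neg_distrib] at this
  linarith

lemma sum_pi_prod_mul_apply {R ι X : Type*} [CommSemiring R] [Fintype ι] [DecidableEq ι]
    [Fintype X] (f h : X → R) (i : ι) :
    ∑ ω : ι → X, (∏ j, f (ω j)) * h (ω i)
      = (∑ x, f x * h x) * ∏ _j ∈ univ \ {i}, ∑ x, f x := by
  set F : ι → X → R := Function.update (fun _ => f) i (fun x => f x * h x)
  have hF : ∀ ω : ι → X, (∏ j, f (ω j)) * h (ω i) = ∏ j, F j (ω j) := fun ω => by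
    have : (fun j => F j (ω j)) = Function.update (fun j => f (ω j)) i (f (ω i) * h (ω i)) := by
      funext j
      by_cases hj : j = i
      · subst hj; simp [F]
      · simp [F, hj]
    rw [this, prod_update_of_mem (mem_univ i),
      prod_eq_mul_prod_sdiff_singleton_of_mem (mem_univ i)]
    ring
  have hsum : (fun j => ∑ x, F j x)
      = Function.update (fun _ => ∑ x, f x) i (∑ x, f x * h x) := by
    funext j
    by_cases hj : j = i
    · subst hj; simp [F]
    · simp [F, hj]
  rw [sum_congr rfl fun ω _ => hF ω, ← Fintype.prod_sum, hsum, prod_update_of_mem (mem_univ i)]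

theorem sum_pi_prod_mul_sum_congr {R ι X : Type*} [CommSemiring R] [Fintype ι] [DecidableEq ι]
    [Fintype X] (f h₁ h₂ : X → R) (h : ∑ x, f x * h₁ x = ∑ x, f x * h₂ x) :
    ∑ ω : ι → X, (∏ j, f (ω j)) * ∑ i, h₁ (ω i)
      = ∑ ω : ι → X, (∏ j, f (ω j)) * ∑ i, h₂ (ω i) := by
  simp only [mul_sum]
  rw [sum_comm]
  conv_rhs => rw [sum_comm]
  simp only [sum_pi_prod_mul_apply, h]

def Vt.neg (m : ℕ) : Equiv.Perm (Vt m) :=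
  Function.Involutive.toPerm
    (fun v => ⟨-v, by
      have hv := v.2
      simp only [Vset, mem_erase, mem_Icc] at hv ⊢
      omega⟩)
    fun v => by simp

@[simp]
lemma Vt.coe_neg {m : ℕ} (v : Vt m) : (Vt.neg m v : ℤ) = -v := rfl

lemma Vt.sum_coe (m : ℕ) : ∑ v : Vt m, ((v : ℤ) : ℝ) = 0 :=
  sum_eq_zero_of_comp_eq_neg (Vt.neg m) fun v => by simp

lemma card_Vt (m : ℕ) : Fintype.card (Vt m) = 2 * m := by
  rw [Fintype.card_coe, Vset, card_erase_of_mem (by simp), Int.card_Icc]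
  omega

lemma two_mul_sub_one_ne_zero (m : ℕ) : (2 * m - 1 : ℝ) ≠ 0 :=
  sub_ne_zero.2 (by exact_mod_cast (by omega : 2 * m ≠ 1))

lemma sum_RR_mul (m : ℕ) (lam : ℝ) (v : Vt m) (F : Vt m → ℝ) :
    ∑ w, RR m lam v w * F w = (1 - lam) * F v + lam / (2 * m - 1) * (∑ w, F w - F v) := by
  rw [← add_sum_erase univ _ (mem_univ v), ← add_sum_erase univ F (mem_univ v),
    add_sub_cancel_left, mul_sum]
  congr 1
  · simp [RR]
  · exact sum_congr rfl fun w hw => by simp [RR, ne_of_mem_erase hw]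

lemma sum_RR (m : ℕ) (lam : ℝ) (v : Vt m) : ∑ w, RR m lam v w = 1 := by
  have h := sum_RR_mul m lam v 1
  simp only [Pi.one_apply, mul_one, sum_const, card_univ, card_Vt, nsmul_eq_mul, Nat.cast_mul,
    Nat.cast_ofNat] at h
  rw [h, div_mul_cancel₀ _ (two_mul_sub_one_ne_zero m)]
  ring

lemma sum_RR_mul_coe (m : ℕ) (lam : ℝ) (v : Vt m) :
    ∑ w, RR m lam v w * ((w : ℤ) : ℝ) = (2 * m - 2 * m * lam - 1) / (2 * m - 1) * (v : ℤ) := by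
  have := two_mul_sub_one_ne_zero m
  rw [sum_RR_mul, Vt.sum_coe]
  field_simp
  ring

def Query.negRow {k m : ℕ} (g : Fin k) : Equiv.Perm (Query k m) :=
  Function.Involutive.toPerm (fun q => Function.update q g ((q g).trans (Vt.neg m))) fun _ => by
    funext j
    by_cases hj : j = g
    · subst hj
      ext c
      simp
    · simp [hj]

lemma Query.negRow_apply {k m : ℕ} (g : Fin k) (q : Query k m) :
    Query.negRow g q = Function.update q g ((q g).trans (Vt.neg m)) := rfl

lemma sum_query_apply_symm_of_ne {k m : ℕ} {g g' : Fin k} (hg : g' ≠ g) (w : Vt m) :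
    ∑ q : Query k m, ((q g ((q g').symm w) : ℤ) : ℝ) = 0 :=
  sum_eq_zero_of_comp_eq_neg (Query.negRow g) fun q => by
    simp [Query.negRow_apply, Function.update_of_ne hg]

lemma estimator_denom_ne_zero {m : ℕ} {lam : ℝ} (hlam : lam < 1 - 1 / (2 * m)) :
    (2 * m - 2 * m * lam - 1 : ℝ) ≠ 0 := by
  intro h
  have hm : (m : ℝ) ≠ 0 := by
    rintro h0
    simp [h0] at h
  have : lam = 1 - 1 / (2 * m) := by
    field_simp
    linarith
  linarith

lemma sum_query_RR_mul_decode {k m : ℕ} {lam : ℝ} (hden : (2 * m - 2 * m * lam - 1 : ℝ) ≠ 0)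
    (g g' : Fin k) (v : Vt m) :
    ∑ q : Query k m, ∑ w, RR m lam v w *
        ((2 * m - 1) / (2 * m - 2 * m * lam - 1) * (decodeQA k m (g', v, q, w) g : ℝ))
      = ∑ _q : Query k m, ∑ w, RR m lam v w * (if g' = g then ((v : ℤ) : ℝ) else 0) := by
  by_cases hg : g' = g
  · subst hg
    refine sum_congr rfl fun _ _ => ?_
    simp only [decodeQA, Equiv.apply_symm_apply, if_true]
    simp_rw [mul_left_comm _ ((2 * m - 1 : ℝ) / _), ← mul_sum, sum_RR_mul_coe, ← sum_mul, sum_RR]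
    rw [one_mul, ← mul_assoc, div_mul_div_cancel₀ hden, div_self (two_mul_sub_one_ne_zero m),
      one_mul]
  · rw [sum_comm]
    simp only [hg, if_false, mul_zero, sum_const_zero]
    refine sum_eq_zero fun w _ => ?_
    rw [← mul_sum, ← mul_sum]
    simp only [decodeQA]
    rw [sum_query_apply_symm_of_ne hg, mul_zero, mul_zero]

lemma sum_wQA_mul_estimate {k m : ℕ} (θ : Fin k → ℝ) (p : Fin k → Vt m → ℝ) {lam : ℝ}
    (hden : (2 * m - 2 * m * lam - 1 : ℝ) ≠ 0) (g : Fin k) :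
    ∑ x : OmegaQA k m, wQA k m θ p lam x *
        ((2 * m - 1) / (2 * m - 2 * m * lam - 1) * (decodeQA k m x g : ℝ))
      = ∑ x : OmegaQA k m, wQA k m θ p lam x * (if x.1 = g then ((x.2.1 : ℤ) : ℝ) else 0) := by
  simp only [Fintype.sum_prod_type, wQA]
  refine sum_congr rfl fun g' _ => sum_congr rfl fun v _ => ?_
  simp_rw [mul_assoc _ (RR m lam v _), ← mul_sum]
  rw [sum_query_RR_mul_decode hden]

theorem stmt7_general (m k n : ℕ)
    (p : Fin k → Vt m → ℝ)
    (θ : Fin k → ℝ)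
    (lam : ℝ) (hlam1 : lam < 1 - 1/(2*m))
    (g : Fin k) :
    (∑ ω : Fin n → OmegaQA k m,
        (∏ i, wQA k m θ p lam (ω i)) * estQA k m n lam ω g)
      = ∑ ω : Fin n → OmegaQA k m,
          (∏ i, wQA k m θ p lam (ω i)) * trueAgg k m n ω g := by
  simp only [estQA, trueAgg, mul_sum univ _ ((2 * m - 1 : ℝ) / _)]
  exact sum_pi_prod_mul_sum_congr _ _ _
    (sum_wQA_mul_estimate θ p (estimator_denom_ne_zero hlam1) g)

/-- The Q&A estimator is unbiased: for every group `g`,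
`E[Ŝ_QA(g)] = E[S(g)]`, where the expectation is over `n` i.i.d. users, each
distributed according to the single-user Q&A model. -/
theorem stmt7 (m k n : ℕ) (hm : 0 < m) (hk : 2 ≤ k) (hn : 0 < n)
    (p : Fin k → Vt m → ℝ)
    (hpsum : ∀ g, ∑ v : Vt m, p g v = 1)
    (hp : ∀ g v, 0 < p g v ∧ p g v < 1)
    (θ : Fin k → ℝ) (hθ0 : ∀ g, 0 ≤ θ g) (hθ1 : ∑ g, θ g = 1)
    (lam : ℝ) (hlam0 : 0 ≤ lam) (hlam1 : lam < 1 - 1/(2*m))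
    (g : Fin k) :
    (∑ ω : Fin n → OmegaQA k m,
        (∏ i, wQA k m θ p lam (ω i)) * estQA k m n lam ω g)
      = ∑ ω : Fin n → OmegaQA k m,
          (∏ i, wQA k m θ p lam (ω i)) * trueAgg k m n ω g :=
  stmt7_general m k n p θ lam hlam1 g
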